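/- Let Φ : B × (−ε,ε) → ℝ³ (B the open unit ball of ℝ²) be a C² homeomorphism with Jacobian bounded away from 0 and ∞, and let f ∈ H²(Φ(B×(−ε,ε)); ℝ³) satisfy f ∘ Φ(u,0) = 0 for a.e. u ∈ B and |∂_t Φ| = 1. If moreover the Jacobian ratio bound |det DΦ(u,t)|/|det DΦ(u,s)| ≤ 2 holds for all (u,t,s), then ∫ |f|² dx ≤ 2ε² ∫ |∇f|² dx over Φ(B×(−ε,ε)). -/

import Mathlib

/-
Along each normal line `t ↦ Φ (u, t)` the field vanishes at `t = 0`, so by the fundamental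
theorem of calculus and Jensen's inequality `|f (Φ (u, t))|² ≤ |t| ∫ |∂ₛ (f ∘ Φ)(u, s)|² ds`,
and `|∂ₛ (f ∘ Φ)| ≤ |∇f|` because `∂ₜΦ` is a unit vector. Multiplying by the Jacobian
`J(u, t) ≤ 2 J(u, s)` moves the weight inside the `s`-integral; integrating in `t` contributes
`∫ |t| dt = ε²`, and the change of variables `x = Φ (u, t)` turns both weighted integrals over
`B × (-ε, ε)` into integrals over `Φ (B × (-ε, ε))`.
-/


open MeasureTheory
noncomputable section

/-- Three-dimensional Euclidean space. -/
abbrev E3 := EuclideanSpace ℝ (Fin 3)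

/-- View a vector of `E3` as a plain function `Fin 3 → ℝ`. -/
def toPi (x : E3) : Fin 3 → ℝ := (WithLp.equiv 2 (Fin 3 → ℝ)) x

/-- Build a vector of `E3` from a plain function `Fin 3 → ℝ`. -/
def ofPi (x : Fin 3 → ℝ) : E3 := (WithLp.equiv 2 (Fin 3 → ℝ)).symm x

/-- Cross product on `E3`. -/
def cross3 (a b : E3) : E3 := ofPi (crossProduct (toPi a) (toPi b))

/-- Partial derivative `∂_j v_i` of a vector field. -/
def pd (v : E3 → E3) (x : E3) (j i : Fin 3) : ℝ :=
  toPi (fderiv ℝ v x (EuclideanSpace.single j 1)) i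

/-- Divergence of a vector field. -/
def div3 (v : E3 → E3) (x : E3) : ℝ := ∑ i, pd v x i i

/-- Curl of a vector field. -/
def curl3 (v : E3 → E3) (x : E3) : E3 :=
  ofPi ![pd v x 1 2 - pd v x 2 1, pd v x 2 0 - pd v x 0 2, pd v x 0 1 - pd v x 1 0]

/-- Squared Frobenius norm of the gradient of a vector field. -/
def gradSq (v : E3 → E3) (x : E3) : ℝ :=
  ∑ j, ‖fderiv ℝ v x (EuclideanSpace.single j 1)‖ ^ 2

/-- Squared Frobenius norm of the second gradient of a vector field. -/
def grad2Sq (v : E3 → E3) (x : E3) : ℝ :=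
  ∑ j, ∑ k, ‖fderiv ℝ (fderiv ℝ v) x (EuclideanSpace.single j 1) (EuclideanSpace.single k 1)‖ ^ 2

/-- Membership in `H¹(Ω, ℝ³)` (classical-derivative formulation). -/
def MemH1 (Ω : Set E3) (v : E3 → E3) : Prop :=
  DifferentiableOn ℝ v Ω ∧ IntegrableOn (fun x => ‖v x‖ ^ 2) Ω ∧
    IntegrableOn (fun x => gradSq v x) Ω

/-- Membership in `H²(Ω, ℝ³)` (classical-derivative formulation). -/
def MemH2 (Ω : Set E3) (v : E3 → E3) : Prop :=
  MemH1 Ω v ∧ DifferentiableOn ℝ (fderiv ℝ v) Ω ∧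
    IntegrableOn (fun x => grad2Sq v x) Ω

/-- `Ω` is a bounded open set whose boundary is the zero level set of a `C³`
defining function `f` with nonvanishing gradient on the boundary. -/
def C3DefiningFn (Ω : Set E3) (f : E3 → ℝ) : Prop :=
  IsOpen Ω ∧ Bornology.IsBounded Ω ∧ ContDiff ℝ 3 f ∧
    Ω = {x | f x < 0} ∧ ∀ x ∈ frontier Ω, fderiv ℝ f x ≠ 0

/-- Outward unit normal induced by a defining function. -/
def normalOf (f : E3 → ℝ) (x : E3) : E3 := ‖gradient f x‖⁻¹ • gradient f x

end

open MeasureTheory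
noncomputable section

abbrev E2 := EuclideanSpace ℝ (Fin 2)

/-- Canonical basis of `E2 × ℝ`. -/
def tubBasis : Fin 3 → E2 × ℝ :=
  ![(EuclideanSpace.single 0 1, (0:ℝ)), (EuclideanSpace.single 1 1, (0:ℝ)), (0, (1:ℝ))]

/-- Absolute value of the Jacobian determinant of a chart `Φ : E2 × ℝ → E3`. -/
def tubJac (Φ : E2 × ℝ → E3) (p : E2 × ℝ) : ℝ :=
  |(Matrix.of fun i j => toPi (fderiv ℝ Φ p (tubBasis j)) i).det|

end

open Set
open scoped ENNReal

lemma sq_norm_setIntegral_le_measureReal_mul {α F : Type*} [MeasurableSpace α]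
    [NormedAddCommGroup F] [NormedSpace ℝ F] [CompleteSpace F] {μ : Measure α} {s : Set α}
    (hs : μ s ≠ ⊤) {h : α → F} (hh : IntegrableOn h s μ)
    (hh2 : IntegrableOn (fun x => ‖h x‖ ^ 2) s μ) :
    ‖∫ x in s, h x ∂μ‖ ^ 2 ≤ μ.real s * ∫ x in s, ‖h x‖ ^ 2 ∂μ := by
  rcases eq_or_ne (μ s) 0 with hs0 | hs0
  · simp [Measure.restrict_eq_zero.2 hs0]
  have hjensen : ‖⨍ x in s, h x ∂μ‖ ^ 2 ≤ ⨍ x in s, ‖h x‖ ^ 2 ∂μ :=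
    (convexOn_norm convex_univ).pow (fun _ _ => norm_nonneg _) 2 |>.map_set_average_le
      (by fun_prop) isClosed_univ hs0 hs (by simp) hh hh2
  have hpos : 0 < μ.real s := ENNReal.toReal_pos hs0 hs
  rw [setAverage_eq, setAverage_eq, norm_smul, mul_pow, smul_eq_mul, Real.norm_eq_abs,
    sq_abs, inv_pow] at hjensen
  have := mul_le_mul_of_nonneg_left hjensen (sq_nonneg (μ.real s))
  field_simp at this
  nlinarith [this]

lemma norm_sub_sq_le_abs_mul_integral_norm_deriv_sq {F : Type*} [NormedAddCommGroup F]
    [NormedSpace ℝ F] [CompleteSpace F] {g : ℝ → F} {a b : ℝ}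
    (hg : ∀ s ∈ uIcc a b, DifferentiableAt ℝ g s)
    (hint : IntegrableOn (fun s => ‖deriv g s‖ ^ 2) (uIoc a b)) :
    ‖g b - g a‖ ^ 2 ≤ |b - a| * ∫ s in uIoc a b, ‖deriv g s‖ ^ 2 := by
  have hfin : volume (uIoc a b) ≠ ⊤ := by simp [Real.volume_uIoc]
  have : IsFiniteMeasure (volume.restrict (uIoc a b)) := isFiniteMeasure_restrict.2 hfin
  have hL1 : IntegrableOn (deriv g) (uIoc a b) :=
    ((memLp_two_iff_integrable_sq_norm (aestronglyMeasurable_deriv g _)).2 hint).integrable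
      one_le_two
  have hftc : ∫ s in a..b, deriv g s = g b - g a :=
    intervalIntegral.integral_deriv_eq_sub hg (intervalIntegrable_iff.2 hL1)
  calc ‖g b - g a‖ ^ 2 = ‖∫ s in uIoc a b, deriv g s‖ ^ 2 := by
        rw [← hftc, intervalIntegral.norm_integral_eq_norm_integral_uIoc]
    _ ≤ volume.real (uIoc a b) * ∫ s in uIoc a b, ‖deriv g s‖ ^ 2 :=
        sq_norm_setIntegral_le_measureReal_mul hfin hL1 hint
    _ = |b - a| * ∫ s in uIoc a b, ‖deriv g s‖ ^ 2 := by
        simp [Measure.real, Real.volume_uIoc]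

lemma enorm_sub_sq_le_abs_mul_lintegral_enorm_deriv_sq {F : Type*} [NormedAddCommGroup F]
    [NormedSpace ℝ F] [CompleteSpace F] {g : ℝ → F} {a b : ℝ}
    (hg : ∀ s ∈ uIcc a b, DifferentiableAt ℝ g s) :
    ‖g b - g a‖ₑ ^ 2 ≤ ENNReal.ofReal |b - a| * ∫⁻ s in uIoc a b, ‖deriv g s‖ₑ ^ 2 := by
  have hsq : ∀ x : F, ‖x‖ₑ ^ 2 = ENNReal.ofReal (‖x‖ ^ 2) := fun x => by
    rw [ENNReal.ofReal_pow (norm_nonneg x), ofReal_norm]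
  rcases eq_or_ne a b with rfl | hab
  · simp
  by_cases hfin : ∫⁻ s in uIoc a b, ‖deriv g s‖ₑ ^ 2 = ⊤
  · rw [hfin, ENNReal.mul_top (by simpa [sub_eq_zero] using hab.symm)]
    exact le_top
  simp only [hsq] at hfin ⊢
  have hint : IntegrableOn (fun s => ‖deriv g s‖ ^ 2) (uIoc a b) :=
    ⟨(aestronglyMeasurable_deriv g _).norm.pow 2,
      (hasFiniteIntegral_iff_ofReal (.of_forall fun _ => by positivity)).2
        (lt_top_iff_ne_top.2 hfin)⟩
  rw [← ofReal_integral_eq_lintegral_ofReal hint (.of_forall fun _ => by positivity),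
    ← ENNReal.ofReal_mul (abs_nonneg _)]
  exact ENNReal.ofReal_le_ofReal (norm_sub_sq_le_abs_mul_integral_norm_deriv_sq hg hint)

lemma intervalIntegral_abs_symm {ε : ℝ} (hε : 0 ≤ ε) : ∫ t in -ε..ε, |t| = ε ^ 2 := by
  rw [← intervalIntegral.integral_add_adjacent_intervals (b := 0)
    (continuous_abs.intervalIntegrable _ _) (continuous_abs.intervalIntegrable _ _)]
  have hneg := intervalIntegral.integral_comp_neg (a := 0) (b := ε) (fun t : ℝ => |t|)
  have hpos : ∫ t in (0:ℝ)..ε, |t| = ∫ t in (0:ℝ)..ε, t :=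
    intervalIntegral.integral_congr fun t ht =>
      abs_of_nonneg (by simp only [uIcc_of_le hε] at ht; exact ht.1)
  simp only [abs_neg, neg_zero] at hneg
  rw [← hneg, hpos]
  simp

lemma setLIntegral_Ioo_symm_ofReal_abs {ε : ℝ} (hε : 0 ≤ ε) :
    ∫⁻ t in Ioo (-ε) ε, ENNReal.ofReal |t| = ENNReal.ofReal (ε ^ 2) := by
  rw [← ofReal_integral_eq_lintegral_ofReal
      (continuous_abs.integrableOn_Icc.mono_set Ioo_subset_Icc_self)
      (.of_forall fun t => abs_nonneg t),
    ← integral_Ioc_eq_integral_Ioo, ← intervalIntegral.integral_of_le (by linarith),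
    intervalIntegral_abs_symm hε]

lemma norm_apply_sq_le_sq_norm_mul_sum_single {ι F : Type*} [Fintype ι] [DecidableEq ι]
    [NormedAddCommGroup F] [NormedSpace ℝ F] (T : EuclideanSpace ℝ ι →L[ℝ] F)
    (y : EuclideanSpace ℝ ι) :
    ‖T y‖ ^ 2 ≤ ‖y‖ ^ 2 * ∑ j, ‖T (EuclideanSpace.single j 1)‖ ^ 2 := by
  have hy : T y = ∑ j, y j • T (EuclideanSpace.single j 1) := by
    conv_lhs => rw [← (EuclideanSpace.basisFun ι ℝ).sum_repr y]
    simp [map_sum]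
  have htri : ‖T y‖ ≤ ∑ j, |y j| * ‖T (EuclideanSpace.single j 1)‖ := by
    rw [hy]
    refine (norm_sum_le _ _).trans_eq ?_
    simp [norm_smul]
  calc ‖T y‖ ^ 2 ≤ (∑ j, |y j| * ‖T (EuclideanSpace.single j 1)‖) ^ 2 :=
        pow_le_pow_left₀ (norm_nonneg _) htri 2
    _ ≤ (∑ j, |y j| ^ 2) * ∑ j, ‖T (EuclideanSpace.single j 1)‖ ^ 2 :=
        Finset.sum_mul_sq_le_sq_mul_sq _ _ _
    _ = ‖y‖ ^ 2 * ∑ j, ‖T (EuclideanSpace.single j 1)‖ ^ 2 := by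
        simp [EuclideanSpace.norm_sq_eq]

lemma norm_fderiv_apply_sq_le_gradSq (v : E3 → E3) (x y : E3) :
    ‖fderiv ℝ v x y‖ ^ 2 ≤ ‖y‖ ^ 2 * gradSq v x :=
  norm_apply_sq_le_sq_norm_mul_sum_single _ y

lemma enorm_sq_le_abs_mul_lintegral_gradSq {X : Type*} [NormedAddCommGroup X] [NormedSpace ℝ X]
    {Φ : X × ℝ → E3} {f : E3 → E3} {u : X} {ε t : ℝ}
    (hΦ : ∀ s ∈ Ioo (-ε) ε, DifferentiableAt ℝ Φ (u, s))
    (hunit : ∀ s ∈ Ioo (-ε) ε, ‖fderiv ℝ Φ (u, s) (0, 1)‖ = 1)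
    (hf : ∀ s ∈ Ioo (-ε) ε, DifferentiableAt ℝ f (Φ (u, s)))
    (hf0 : f (Φ (u, 0)) = 0) (ht : t ∈ Ioo (-ε) ε) :
    ‖f (Φ (u, t))‖ₑ ^ 2 ≤
      ENNReal.ofReal |t| * ∫⁻ s in Ioo (-ε) ε, ENNReal.ofReal (gradSq f (Φ (u, s))) := by
  set g : ℝ → E3 := fun s => f (Φ (u, s))
  have hsub : uIcc 0 t ⊆ Ioo (-ε) ε :=
    ordConnected_Ioo.uIcc_subset ⟨by linarith [ht.1, ht.2], by linarith [ht.1, ht.2]⟩ ht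
  have hderiv : ∀ s ∈ Ioo (-ε) ε,
      HasDerivAt g (fderiv ℝ f (Φ (u, s)) (fderiv ℝ Φ (u, s) (0, 1))) s := fun s hs =>
    (hf s hs).hasFDerivAt.comp_hasDerivAt s
      ((hΦ s hs).hasFDerivAt.comp_hasDerivAt s ((hasDerivAt_const s u).prodMk (hasDerivAt_id s)))
  have hbound : ∀ s ∈ Ioo (-ε) ε, ‖deriv g s‖ₑ ^ 2 ≤ ENNReal.ofReal (gradSq f (Φ (u, s))) := by
    intro s hs
    rw [(hderiv s hs).deriv, ← ofReal_norm, ← ENNReal.ofReal_pow (norm_nonneg _)]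
    refine ENNReal.ofReal_le_ofReal ?_
    simpa [hunit s hs] using norm_fderiv_apply_sq_le_gradSq f (Φ (u, s)) (fderiv ℝ Φ (u, s) (0, 1))
  calc ‖f (Φ (u, t))‖ₑ ^ 2 = ‖g t - g 0‖ₑ ^ 2 := by simp [g, hf0]
    _ ≤ ENNReal.ofReal |t - 0| * ∫⁻ s in uIoc 0 t, ‖deriv g s‖ₑ ^ 2 :=
        enorm_sub_sq_le_abs_mul_lintegral_enorm_deriv_sq fun s hs =>
          (hderiv s (hsub hs)).differentiableAt
    _ ≤ ENNReal.ofReal |t| * ∫⁻ s in Ioo (-ε) ε, ENNReal.ofReal (gradSq f (Φ (u, s))) := by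
        rw [sub_zero]
        gcongr ENNReal.ofReal |t| * ?_
        calc ∫⁻ s in uIoc 0 t, ‖deriv g s‖ₑ ^ 2
            ≤ ∫⁻ s in uIoc 0 t, ENNReal.ofReal (gradSq f (Φ (u, s))) :=
              setLIntegral_mono' measurableSet_uIoc fun s hs =>
                hbound s (hsub (uIoc_subset_uIcc hs))
          _ ≤ _ := lintegral_mono_set (uIoc_subset_uIcc.trans hsub)

lemma setLIntegral_Ioo_mul_le_of_le_abs_mul {ε K : ℝ} (hε : 0 ≤ ε) (hK : 0 ≤ K)
    {w : ℝ → ℝ} {φ γ : ℝ → ℝ≥0∞} (hw : ∀ t ∈ Ioo (-ε) ε, ∀ s ∈ Ioo (-ε) ε, w t ≤ K * w s)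
    (hφ : ∀ t ∈ Ioo (-ε) ε, φ t ≤ ENNReal.ofReal |t| * ∫⁻ s in Ioo (-ε) ε, γ s) :
    ∫⁻ t in Ioo (-ε) ε, ENNReal.ofReal (w t) * φ t ≤
      ENNReal.ofReal (K * ε ^ 2) * ∫⁻ s in Ioo (-ε) ε, ENNReal.ofReal (w s) * γ s := by
  set I := Ioo (-ε) ε
  set M := ∫⁻ s in I, ENNReal.ofReal (w s) * γ s
  have hpoint : ∀ t ∈ I,
      ENNReal.ofReal (w t) * φ t ≤ ENNReal.ofReal |t| * (ENNReal.ofReal K * M) := by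
    intro t ht
    calc ENNReal.ofReal (w t) * φ t
        ≤ ENNReal.ofReal |t| * (ENNReal.ofReal (w t) * ∫⁻ s in I, γ s) := by
          rw [mul_left_comm]; gcongr; exact hφ t ht
      _ ≤ ENNReal.ofReal |t| * ∫⁻ s in I, ENNReal.ofReal (w t) * γ s := by
          gcongr; exact lintegral_const_mul_le _ _
      _ ≤ ENNReal.ofReal |t| * ∫⁻ s in I, ENNReal.ofReal K * (ENNReal.ofReal (w s) * γ s) := by
          gcongr ENNReal.ofReal |t| * ?_
          refine setLIntegral_mono' measurableSet_Ioo fun s hs => ?_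
          rw [← mul_assoc, ← ENNReal.ofReal_mul hK]
          exact mul_le_mul_left (ENNReal.ofReal_le_ofReal (hw t ht s hs)) _
      _ = ENNReal.ofReal |t| * (ENNReal.ofReal K * M) := by
          rw [lintegral_const_mul' _ _ ENNReal.ofReal_ne_top]
  calc ∫⁻ t in I, ENNReal.ofReal (w t) * φ t
      ≤ ∫⁻ t in I, ENNReal.ofReal |t| * (ENNReal.ofReal K * M) :=
        setLIntegral_mono' measurableSet_Ioo hpoint
    _ = ENNReal.ofReal (K * ε ^ 2) * M := by
      rw [lintegral_mul_const _ measurable_abs.ennreal_ofReal,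
        setLIntegral_Ioo_symm_ofReal_abs hε, ENNReal.ofReal_mul hK]
      ring

lemma setLIntegral_prod_mul_le_of_le_abs_mul {X : Type*} [MeasurableSpace X] {μ : Measure X}
    [SFinite μ] {U : Set X} (hU : MeasurableSet U) {ε K : ℝ} (hε : 0 ≤ ε) (hK : 0 ≤ K)
    {J : X × ℝ → ℝ} {F G : X × ℝ → ℝ≥0∞}
    (hJG : AEMeasurable (fun p => ENNReal.ofReal (J p) * G p)
      ((μ.prod volume).restrict (U ×ˢ Ioo (-ε) ε)))
    (hJ : ∀ u ∈ U, ∀ t ∈ Ioo (-ε) ε, ∀ s ∈ Ioo (-ε) ε, J (u, t) ≤ K * J (u, s))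
    (hF : ∀ᵐ u ∂μ, u ∈ U → ∀ t ∈ Ioo (-ε) ε,
      F (u, t) ≤ ENNReal.ofReal |t| * ∫⁻ s in Ioo (-ε) ε, G (u, s)) :
    ∫⁻ p in U ×ˢ Ioo (-ε) ε, ENNReal.ofReal (J p) * F p ∂μ.prod volume ≤
      ENNReal.ofReal (K * ε ^ 2) *
        ∫⁻ p in U ×ˢ Ioo (-ε) ε, ENNReal.ofReal (J p) * G p ∂μ.prod volume := by
  calc ∫⁻ p in U ×ˢ Ioo (-ε) ε, ENNReal.ofReal (J p) * F p ∂μ.prod volume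
      ≤ ∫⁻ u in U, ∫⁻ t in Ioo (-ε) ε, ENNReal.ofReal (J (u, t)) * F (u, t) ∂volume ∂μ := by
        rw [← Measure.prod_restrict]; exact lintegral_prod_le _
    _ ≤ ∫⁻ u in U, ENNReal.ofReal (K * ε ^ 2) *
          ∫⁻ s in Ioo (-ε) ε, ENNReal.ofReal (J (u, s)) * G (u, s) ∂volume ∂μ := by
        refine lintegral_mono_ae ?_
        filter_upwards [ae_restrict_of_ae hF, ae_restrict_mem hU] with u hFu hu
        exact setLIntegral_Ioo_mul_le_of_le_abs_mul hε hK (hJ u hu) (hFu hu)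
    _ = ENNReal.ofReal (K * ε ^ 2) *
          ∫⁻ p in U ×ˢ Ioo (-ε) ε, ENNReal.ofReal (J p) * G p ∂μ.prod volume := by
        rw [lintegral_const_mul' _ _ ENNReal.ofReal_ne_top, setLIntegral_prod _ hJG]

/-- Coordinates in which `tubJac` is the Jacobian of `Φ ∘ splitLast : E3 → E3`; being
volume-preserving, it lets the change of variables formula for self-maps of `E3` apply to `Φ`. -/
noncomputable def splitLast : E3 ≃L[ℝ] E2 × ℝ :=
  LinearEquiv.toContinuousLinearEquiv
  { toFun x := ((WithLp.equiv 2 (Fin 2 → ℝ)).symm (fun i => x i.castSucc), x (Fin.last 2))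
    invFun p := (WithLp.equiv 2 (Fin 3 → ℝ)).symm (Fin.snoc (WithLp.equiv 2 (Fin 2 → ℝ) p.1) p.2)
    map_add' x y := by ext i <;> simp
    map_smul' c x := by ext i <;> simp
    left_inv x := by
      ext i
      refine Fin.lastCases ?_ (fun j => ?_) i
      · simp; rfl
      · simp
    right_inv p := by ext i <;> simp; rfl }

lemma splitLast_apply (x : E3) :
    splitLast x = ((WithLp.equiv 2 (Fin 2 → ℝ)).symm (fun i => x i.castSucc), x (Fin.last 2)) :=
  rfl

lemma measurePreserving_splitLast : MeasurePreserving splitLast volume volume := by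
  have hsplit : MeasurePreserving (MeasurableEquiv.piFinSuccAbove (fun _ : Fin 3 => ℝ) 2) :=
    volume_preserving_piFinSuccAbove _ 2
  have hswap : MeasurePreserving (Prod.swap : ℝ × (Fin 2 → ℝ) → (Fin 2 → ℝ) × ℝ) := by
    rw [Measure.volume_eq_prod, Measure.volume_eq_prod]
    exact Measure.measurePreserving_swap
  have htoLp : MeasurePreserving (Prod.map (MeasurableEquiv.toLp 2 (Fin 2 → ℝ)) (id : ℝ → ℝ)) := by
    rw [Measure.volume_eq_prod, Measure.volume_eq_prod]
    exact (EuclideanSpace.volume_preserving_symm_measurableEquiv_toLp (Fin 2)).symm.prod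
      (.id volume)
  have hcomp : Prod.map (MeasurableEquiv.toLp 2 (Fin 2 → ℝ)) id ∘ Prod.swap ∘
      MeasurableEquiv.piFinSuccAbove (fun _ : Fin 3 => ℝ) 2 ∘
      (MeasurableEquiv.toLp 2 (Fin 3 → ℝ)).symm = splitLast := by
    funext x
    ext i
    · fin_cases i <;> rfl
    · rfl
  rw [← hcomp]
  exact htoLp.comp (hswap.comp (hsplit.comp
    (EuclideanSpace.volume_preserving_symm_measurableEquiv_toLp (Fin 3))))

lemma splitLast_single (j : Fin 3) : splitLast (EuclideanSpace.single j 1) = tubBasis j := by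
  fin_cases j <;> ext i <;> (try fin_cases i) <;> simp [splitLast_apply, tubBasis]

lemma tubJac_eq_abs_det (Φ : E2 × ℝ → E3) (p : E2 × ℝ) :
    tubJac Φ p = |((fderiv ℝ Φ p).comp (splitLast : E3 →L[ℝ] E2 × ℝ)).det| := by
  rw [tubJac, ContinuousLinearMap.det,
    ← LinearMap.det_toMatrix (EuclideanSpace.basisFun (Fin 3) ℝ).toBasis]
  congr 2
  ext i j
  simp [LinearMap.toMatrix_apply, splitLast_single, toPi]

lemma lintegral_image_eq_setLIntegral_tubJac_mul {Φ : E2 × ℝ → E3} {s : Set (E2 × ℝ)}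
    (hs : IsOpen s) (hΦ : DifferentiableOn ℝ Φ s) (hinj : InjOn Φ s) (g : E3 → ℝ≥0∞) :
    ∫⁻ x in Φ '' s, g x = ∫⁻ p in s, ENNReal.ofReal (tubJac Φ p) * g (Φ p) := by
  set A : E3 →L[ℝ] E2 × ℝ := (splitLast : E3 →L[ℝ] E2 × ℝ)
  have hs' : MeasurableSet (splitLast ⁻¹' s) :=
    hs.measurableSet.preimage splitLast.continuous.measurable
  have hderiv : ∀ q ∈ splitLast ⁻¹' s, HasFDerivWithinAt (Φ ∘ splitLast)
      ((fderiv ℝ Φ (splitLast q)).comp A) (splitLast ⁻¹' s) q := fun q hq =>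
    ((hΦ.differentiableAt (hs.mem_nhds hq)).hasFDerivAt.comp q
      A.hasFDerivAt).hasFDerivWithinAt
  have himage : Φ '' s = (Φ ∘ splitLast) '' (splitLast ⁻¹' s) := by
    rw [image_comp, splitLast.surjective.image_preimage]
  rw [himage, lintegral_image_eq_lintegral_abs_det_fderiv_mul volume hs' hderiv
      (hinj.comp splitLast.injective.injOn (mapsTo_preimage _ _)),
    ← measurePreserving_splitLast.setLIntegral_comp_preimage_emb
      splitLast.toHomeomorph.measurableEmbedding]
  simp only [tubJac_eq_abs_det, Function.comp_apply, A]

theorem IsOpen.image_of_hasStrictFDerivAt_equiv {𝕜 E F : Type*} [NontriviallyNormedField 𝕜]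
    [NormedAddCommGroup E] [NormedSpace 𝕜 E] [CompleteSpace E] [NormedAddCommGroup F]
    [NormedSpace 𝕜 F] {f : E → F} {s : Set E} (hs : IsOpen s)
    (hf : ∀ x ∈ s, ∃ f' : E ≃L[𝕜] F, HasStrictFDerivAt f (f' : E →L[𝕜] F) x) :
    IsOpen (f '' s) := by
  rw [isOpen_iff_mem_nhds]
  rintro _ ⟨x, hx, rfl⟩
  obtain ⟨f', hf'⟩ := hf x hx
  rw [← hf'.map_nhds_eq_of_equiv]
  exact Filter.image_mem_map (hs.mem_nhds hx)

lemma exists_equiv_eq_fderiv_of_tubJac_ne_zero {Φ : E2 × ℝ → E3} {p : E2 × ℝ}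
    (h : tubJac Φ p ≠ 0) : ∃ e : (E2 × ℝ) ≃L[ℝ] E3, (e : E2 × ℝ →L[ℝ] E3) = fderiv ℝ Φ p := by
  set T : E3 →L[ℝ] E3 := (fderiv ℝ Φ p).comp (splitLast : E3 →L[ℝ] E2 × ℝ)
  have hT : LinearMap.det (T : E3 →ₗ[ℝ] E3) ≠ 0 := by
    rwa [tubJac_eq_abs_det, abs_ne_zero] at h
  refine ⟨splitLast.symm.trans (LinearMap.equivOfDetNeZero _ hT).toContinuousLinearEquiv, ?_⟩
  refine ContinuousLinearMap.ext fun v => ?_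
  simp [T]

lemma isOpen_image_of_tubJac_ne_zero {Φ : E2 × ℝ → E3} {s : Set (E2 × ℝ)} (hs : IsOpen s)
    (hΦ : ContDiffOn ℝ 1 Φ s) (hJ : ∀ p ∈ s, tubJac Φ p ≠ 0) : IsOpen (Φ '' s) := by
  refine hs.image_of_hasStrictFDerivAt_equiv (𝕜 := ℝ) fun p hp => ?_
  obtain ⟨e, he⟩ := exists_equiv_eq_fderiv_of_tubJac_ne_zero (hJ p hp)
  exact ⟨e, he ▸ (hΦ.contDiffAt (hs.mem_nhds hp)).hasStrictFDerivAt one_ne_zero⟩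

lemma measurable_tubJac (Φ : E2 × ℝ → E3) : Measurable (tubJac Φ) := by
  simp only [funext (tubJac_eq_abs_det Φ)]
  have hcont : Continuous fun L : E2 × ℝ →L[ℝ] E3 =>
      |(L.comp (splitLast : E3 →L[ℝ] E2 × ℝ)).det| :=
    continuous_abs.comp (ContinuousLinearMap.continuous_det.comp
      (continuous_id.clm_comp continuous_const))
  exact hcont.measurable.comp (measurable_fderiv ℝ Φ)

lemma measurable_gradSq (v : E3 → E3) : Measurable (gradSq v) :=
  Finset.measurable_sum _ fun _ _ => (measurable_fderiv_apply_const ℝ v _).norm.pow_const 2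

lemma lintegral_image_le_of_fiberwise_le {Φ : E2 × ℝ → E3} {U : Set E2} (hU : IsOpen U)
    {ε K : ℝ} (hε : 0 ≤ ε) (hK : 0 ≤ K) (hΦ : DifferentiableOn ℝ Φ (U ×ˢ Ioo (-ε) ε))
    (hinj : InjOn Φ (U ×ˢ Ioo (-ε) ε)) {F : E3 → ℝ≥0∞} {G : E3 → ℝ} (hG : Measurable G)
    (hJ : ∀ u ∈ U, ∀ t ∈ Ioo (-ε) ε, ∀ s ∈ Ioo (-ε) ε, tubJac Φ (u, t) ≤ K * tubJac Φ (u, s))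
    (hF : ∀ᵐ u : E2, u ∈ U → ∀ t ∈ Ioo (-ε) ε,
      F (Φ (u, t)) ≤ ENNReal.ofReal |t| * ∫⁻ s in Ioo (-ε) ε, ENNReal.ofReal (G (Φ (u, s)))) :
    ∫⁻ x in Φ '' (U ×ˢ Ioo (-ε) ε), F x ≤
      ENNReal.ofReal (K * ε ^ 2) * ∫⁻ x in Φ '' (U ×ˢ Ioo (-ε) ε), ENNReal.ofReal (G x) := by
  have hopen : IsOpen (U ×ˢ Ioo (-ε) ε) := hU.prod isOpen_Ioo
  have hmeas : AEMeasurable (fun p => ENNReal.ofReal (tubJac Φ p) * ENNReal.ofReal (G (Φ p)))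
      ((volume.prod volume).restrict (U ×ˢ Ioo (-ε) ε)) :=
    (measurable_tubJac Φ).ennreal_ofReal.aemeasurable.mul
      (hG.ennreal_ofReal.comp_aemeasurable (hΦ.continuousOn.aemeasurable hopen.measurableSet))
  rw [lintegral_image_eq_setLIntegral_tubJac_mul hopen hΦ hinj,
    lintegral_image_eq_setLIntegral_tubJac_mul hopen hΦ hinj, Measure.volume_eq_prod]
  exact setLIntegral_prod_mul_le_of_le_abs_mul (F := fun p => F (Φ p)) hU.measurableSet hε hK
    hmeas hJ hF

lemma integral_le_mul_integral_of_lintegral_le {α : Type*} [MeasurableSpace α] {μ : Measure α}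
    {f g : α → ℝ} {c : ℝ} (hc : 0 ≤ c) (hf : Integrable f μ) (hf0 : 0 ≤ᵐ[μ] f)
    (hg : Integrable g μ) (hg0 : 0 ≤ᵐ[μ] g)
    (h : ∫⁻ x, ENNReal.ofReal (f x) ∂μ ≤ ENNReal.ofReal c * ∫⁻ x, ENNReal.ofReal (g x) ∂μ) :
    ∫ x, f x ∂μ ≤ c * ∫ x, g x ∂μ := by
  rwa [← ENNReal.ofReal_le_ofReal_iff (mul_nonneg hc (integral_nonneg_of_ae hg0)),
    ENNReal.ofReal_mul hc, ofReal_integral_eq_lintegral_ofReal hf hf0,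
    ofReal_integral_eq_lintegral_ofReal hg hg0]

theorem tubular_poincare_first_order
    (ε : ℝ) (hε : 0 < ε)
    (Φ : E2 × ℝ → E3)
    (S : Set (E2 × ℝ)) (hS : S = (Metric.ball (0:E2) 1) ×ˢ Set.Ioo (-ε) ε)
    (hΦ : ContDiffOn ℝ 2 Φ S) (hinj : Set.InjOn Φ S)
    (c C : ℝ) (hc : 0 < c)
    (hJ : ∀ p ∈ S, c ≤ tubJac Φ p ∧ tubJac Φ p ≤ C)
    (hunit : ∀ p ∈ S, ‖fderiv ℝ Φ p ((0:E2), (1:ℝ))‖ = 1)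
    (hratio : ∀ u ∈ Metric.ball (0:E2) 1, ∀ t ∈ Set.Ioo (-ε) ε, ∀ s ∈ Set.Ioo (-ε) ε,
      tubJac Φ (u, t) ≤ 2 * tubJac Φ (u, s))
    (f : E3 → E3) (hf : MemH2 (Φ '' S) f)
    (hf0 : ∀ᵐ u : E2, u ∈ Metric.ball (0:E2) 1 → f (Φ (u, 0)) = 0) :
    (∫ x in Φ '' S, ‖f x‖ ^ 2) ≤ 2 * ε ^ 2 * ∫ x in Φ '' S, gradSq f x := by
  subst hS
  obtain ⟨⟨hfd, hf2, hgrad⟩, -⟩ := hf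
  set S := Metric.ball (0:E2) 1 ×ˢ Ioo (-ε) ε
  have hSopen : IsOpen S := Metric.isOpen_ball.prod isOpen_Ioo
  have hΦd : DifferentiableOn ℝ Φ S := hΦ.differentiableOn two_ne_zero
  have hopen : IsOpen (Φ '' S) := isOpen_image_of_tubJac_ne_zero hSopen (hΦ.of_le one_le_two)
    fun p hp => (hc.trans_le (hJ p hp).1).ne'
  have hslice : ∀ᵐ u : E2, u ∈ Metric.ball (0:E2) 1 → ∀ t ∈ Ioo (-ε) ε,
      ‖f (Φ (u, t))‖ₑ ^ 2 ≤
        ENNReal.ofReal |t| * ∫⁻ s in Ioo (-ε) ε, ENNReal.ofReal (gradSq f (Φ (u, s))) := by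
    filter_upwards [hf0] with u hu0 hu t ht
    exact enorm_sq_le_abs_mul_lintegral_gradSq
      (fun s hs => hΦd.differentiableAt (hSopen.mem_nhds ⟨hu, hs⟩))
      (fun s hs => hunit _ ⟨hu, hs⟩)
      (fun s hs => hfd.differentiableAt (hopen.mem_nhds (mem_image_of_mem Φ ⟨hu, hs⟩)))
      (hu0 hu) ht
  have hmain := lintegral_image_le_of_fiberwise_le (F := fun x => ‖f x‖ₑ ^ 2)
    Metric.isOpen_ball hε.le zero_le_two hΦd hinj (measurable_gradSq f) hratio hslice
  exact integral_le_mul_integral_of_lintegral_le (by positivity) hf2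
    (.of_forall fun _ => sq_nonneg _) hgrad
    (.of_forall fun _ => Finset.sum_nonneg fun _ _ => sq_nonneg _) (by simpa using hmain)
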